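/- arXiv:2202.08388 — 4 statements merged into one kernel-verified Lean document; each statement's English description precedes it below -/
import Mathlib

section
/- Let pa, ε1, ε2, ε3 be random variables on a probability space taking values in finite sets, and define Y = g1(pa, ε1), nd = g2(pa, ε2), dc = g3(Y, ε3) for arbitrary functions g1, g2, g3, where ε1 is independent of pa, ε2 is independent of the pair (pa, ε1), and ε3 is independent of the triple (pa, ε1, ε2). Then I(pa; (nd, dc)) ≤ I(pa; (nd, Y)). -/
/-!
Put `T = (pa, ε1, ε2)`, `V = (nd, Y)` and `W = (nd, dc)`, so that `V = f(T)` and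
`W = k(V, ε3)`. Conditioning on `V = v`, an event determined by `T`, keeps `ε3` independent
of `T`; on that event `W = k(v, ε3)` while `pa` is a function of `T`, so `I(pa; W | V) = 0`.
The chain rule `I(pa; (W, V)) = I(pa; V) + I(pa; W | V)` and nonnegativity of conditional
mutual information then give `I(pa; W) ≤ I(pa; (W, V)) = I(pa; V)`.
-/

open Finset

/-- Probability of the event `U = u` under the weight function `μ`
on a finite sample space. -/
noncomputable def probOf {Ω α : Type} [Fintype Ω] [DecidableEq α]
    (μ : Ω → ℝ) (U : Ω → α) (u : α) : ℝ :=
  ∑ ω, if U ω = u then μ ω else 0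

/-- Shannon entropy (natural logarithm) of the random variable `U`
under the weight function `μ`. -/
noncomputable def entropy {Ω α : Type} [Fintype Ω] [Fintype α] [DecidableEq α]
    (μ : Ω → ℝ) (U : Ω → α) : ℝ :=
  -∑ u, probOf μ U u * Real.log (probOf μ U u)

/-- Mutual information `I(U;V) = H(U) + H(V) - H(U,V)`. -/
noncomputable def mutualInfo {Ω α β : Type} [Fintype Ω] [Fintype α] [Fintype β]
    [DecidableEq α] [DecidableEq β] (μ : Ω → ℝ) (U : Ω → α) (V : Ω → β) : ℝ :=
  entropy μ U + entropy μ V - entropy μ (fun ω => (U ω, V ω))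

/-- The conditional weight function given the event `W = w`. -/
noncomputable def condWeight {Ω γ : Type} [Fintype Ω] [DecidableEq γ]
    (μ : Ω → ℝ) (W : Ω → γ) (w : γ) : Ω → ℝ :=
  fun ω => if W ω = w then μ ω / probOf μ W w else 0

/-- Conditional mutual information
`I(U;V|W) = ∑ w, P(W = w) * I(U;V | W = w)`. -/
noncomputable def condMutualInfo {Ω α β γ : Type} [Fintype Ω]
    [Fintype α] [Fintype β] [Fintype γ]
    [DecidableEq α] [DecidableEq β] [DecidableEq γ]
    (μ : Ω → ℝ) (U : Ω → α) (V : Ω → β) (W : Ω → γ) : ℝ :=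
  ∑ w, probOf μ W w * mutualInfo (condWeight μ W w) U V

/-- `μ` is a probability weight function on the finite sample space. -/
def IsProb {Ω : Type} [Fintype Ω] (μ : Ω → ℝ) : Prop :=
  (∀ ω, 0 ≤ μ ω) ∧ ∑ ω, μ ω = 1

/-- Independence of two finite-valued random variables. -/
def IndepRV {Ω α β : Type} [Fintype Ω] [DecidableEq α] [DecidableEq β]
    (μ : Ω → ℝ) (U : Ω → α) (V : Ω → β) : Prop :=
  ∀ u v, probOf μ (fun ω => (U ω, V ω)) (u, v) = probOf μ U u * probOf μ V v

open Real

lemma mul_negMulLog_div_of_le {p q : ℝ} (hp : 0 ≤ p) (hpq : p ≤ q) :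
    q * negMulLog (p / q) = negMulLog p + p * log q := by
  rcases hp.eq_or_lt with rfl | hp
  · simp
  · have hq : q ≠ 0 := (hp.trans_le hpq).ne'
    rw [negMulLog, negMulLog, log_div hp.ne' hq]
    field_simp
    ring

lemma mul_log_add_log_sub_log_le {p a b : ℝ} (hp : 0 ≤ p) (ha : p ≤ a) (hb : p ≤ b) :
    p * (log a + log b - log p) ≤ a * b - p := by
  rcases hp.eq_or_lt with rfl | hp
  · simpa using mul_nonneg ha hb
  have ha' := hp.trans_le ha
  have hb' := hp.trans_le hb
  have hlog := log_le_sub_one_of_pos (show 0 < a * b / p by positivity)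
  rw [log_div (by positivity) hp.ne', log_mul ha'.ne' hb'.ne'] at hlog
  calc p * (log a + log b - log p) ≤ p * (a * b / p - 1) := mul_le_mul_of_nonneg_left hlog hp.le
    _ = a * b - p := by field_simp

section
variable {Ω α β γ : Type} [Fintype Ω] {μ : Ω → ℝ}

lemma probOf_nonneg [DecidableEq α] (hμ : ∀ ω, 0 ≤ μ ω) (U : Ω → α) (u : α) :
    0 ≤ probOf μ U u :=
  sum_nonneg fun ω _ => by split_ifs <;> simp [hμ ω]

lemma sum_probOf [Fintype α] [DecidableEq α] (U : Ω → α) :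
    ∑ u, probOf μ U u = ∑ ω, μ ω := by
  unfold probOf
  rw [sum_comm]
  simp

lemma probOf_fst [Fintype β] [DecidableEq α] [DecidableEq β] (U : Ω → α) (V : Ω → β)
    (u : α) :
    probOf μ U u = ∑ v, probOf μ (fun ω => (U ω, V ω)) (u, v) := by
  unfold probOf
  rw [sum_comm]
  exact sum_congr rfl fun ω _ => by simp [Prod.ext_iff, ite_and]

lemma probOf_snd [Fintype α] [DecidableEq α] [DecidableEq β] (U : Ω → α) (V : Ω → β)
    (v : β) :
    probOf μ V v = ∑ u, probOf μ (fun ω => (U ω, V ω)) (u, v) := by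
  unfold probOf
  rw [sum_comm]
  exact sum_congr rfl fun ω _ => by simp [Prod.ext_iff, ite_and]

lemma probOf_pair_le_fst [DecidableEq α] [DecidableEq β] (hμ : ∀ ω, 0 ≤ μ ω)
    (U : Ω → α) (V : Ω → β) (u : α) (v : β) :
    probOf μ (fun ω => (U ω, V ω)) (u, v) ≤ probOf μ U u :=
  sum_le_sum fun ω _ => by split_ifs <;> simp_all

lemma probOf_pair_le_snd [DecidableEq α] [DecidableEq β] (hμ : ∀ ω, 0 ≤ μ ω)
    (U : Ω → α) (V : Ω → β) (u : α) (v : β) :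
    probOf μ (fun ω => (U ω, V ω)) (u, v) ≤ probOf μ V v :=
  sum_le_sum fun ω _ => by split_ifs <;> simp_all

lemma probOf_congr [DecidableEq α] {U U' : Ω → α} (h : ∀ ω, μ ω ≠ 0 → U ω = U' ω)
    (u : α) :
    probOf μ U u = probOf μ U' u :=
  sum_congr rfl fun ω _ => by
    by_cases hω : μ ω = 0
    · simp [hω]
    · rw [h ω hω]

lemma probOf_comp [Fintype α] [DecidableEq α] [DecidableEq β] (X : Ω → α) (f : α → β)
    (b : β) :
    probOf μ (fun ω => f (X ω)) b = ∑ x, if f x = b then probOf μ X x else 0 := by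
  unfold probOf
  rw [← sum_fiberwise univ X]
  refine sum_congr rfl fun x _ => ?_
  by_cases h : f x = b <;> simp +contextual [sum_filter, h]

lemma probOf_comp_injective [DecidableEq α] [DecidableEq β] (X : Ω → α) {f : α → β}
    (hf : f.Injective) (a : α) : probOf μ (fun ω => f (X ω)) (f a) = probOf μ X a :=
  sum_congr rfl fun ω _ => by simp [hf.eq_iff]

lemma probOf_pair_comp_self [DecidableEq α] [DecidableEq β] (X : Ω → α) (f : α → β)
    (a : α) (b : β) :
    probOf μ (fun ω => (X ω, f (X ω))) (a, b) = if f a = b then probOf μ X a else 0 := by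
  split_ifs with hab
  · exact sum_congr rfl fun ω _ => by by_cases hX : X ω = a <;> simp [hX, hab]
  · exact sum_eq_zero fun ω _ => if_neg fun h => hab (by
      simp only [Prod.ext_iff] at h
      rw [← h.1, h.2])

lemma isProb_condWeight [DecidableEq γ] (hμ : ∀ ω, 0 ≤ μ ω) (W : Ω → γ) {w : γ}
    (hw : probOf μ W w ≠ 0) : IsProb (condWeight μ W w) := by
  refine ⟨fun ω => ?_, ?_⟩
  · unfold condWeight
    split_ifs
    exacts [div_nonneg (hμ ω) (probOf_nonneg hμ W w), le_rfl]
  · have hterm : ∀ ω, condWeight μ W w ω = (if W ω = w then μ ω else 0) / probOf μ W w :=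
      fun ω => by unfold condWeight; split_ifs <;> simp
    rw [sum_congr rfl fun ω _ => hterm ω, ← sum_div]
    exact div_self hw

lemma probOf_condWeight [DecidableEq α] [DecidableEq γ] (X : Ω → α) (V : Ω → γ) (v : γ)
    (x : α) :
    probOf (condWeight μ V v) X x = probOf μ (fun ω => (X ω, V ω)) (x, v) / probOf μ V v := by
  unfold condWeight probOf
  rw [sum_div]
  exact sum_congr rfl fun ω _ => by
    by_cases h1 : X ω = x <;> by_cases h2 : V ω = v <;> simp [h1, h2]

lemma entropy_eq_sum_negMulLog [Fintype α] [DecidableEq α] (U : Ω → α) :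
    entropy μ U = ∑ u, negMulLog (probOf μ U u) := by
  simp [entropy, negMulLog]

lemma entropy_congr [Fintype α] [DecidableEq α] {U U' : Ω → α}
    (h : ∀ ω, μ ω ≠ 0 → U ω = U' ω) : entropy μ U = entropy μ U' := by
  simp only [entropy, probOf_congr h]

lemma entropy_comp_injective [Fintype α] [Fintype β] [DecidableEq α] [DecidableEq β]
    (X : Ω → α) {f : α → β} (hf : f.Injective) :
    entropy μ (fun ω => f (X ω)) = entropy μ X := by
  simp only [entropy_eq_sum_negMulLog]
  refine (Fintype.sum_of_injective f hf _ _ (fun b hb => ?_) fun a => ?_).symm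
  · have : probOf μ (fun ω => f (X ω)) b = 0 :=
      sum_eq_zero fun ω _ => if_neg fun h => hb ⟨X ω, h⟩
    simp [this]
  · rw [probOf_comp_injective X hf]

lemma entropy_pair_eq_add [Fintype α] [Fintype γ] [DecidableEq α] [DecidableEq γ]
    (hμ : ∀ ω, 0 ≤ μ ω) (X : Ω → α) (V : Ω → γ) :
    entropy μ (fun ω => (X ω, V ω))
      = entropy μ V + ∑ v, probOf μ V v * entropy (condWeight μ V v) X := by
  have hcond : ∀ v, probOf μ V v * entropy (condWeight μ V v) X
      = ∑ x, negMulLog (probOf μ (fun ω => (X ω, V ω)) (x, v))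
        - negMulLog (probOf μ V v) := by
    intro v
    simp only [entropy_eq_sum_negMulLog, probOf_condWeight, mul_sum]
    rw [sum_congr rfl fun x _ => mul_negMulLog_div_of_le (probOf_nonneg hμ _ _)
      (probOf_pair_le_snd hμ X V x v), sum_add_distrib, ← sum_mul, ← probOf_snd, negMulLog]
    ring
  simp only [hcond, sum_sub_distrib]
  rw [entropy_eq_sum_negMulLog, entropy_eq_sum_negMulLog, Fintype.sum_prod_type, sum_comm]
  ring

end

section
variable {Ω α β γ : Type} [Fintype Ω] {μ : Ω → ℝ}
  [Fintype α] [Fintype β] [Fintype γ] [DecidableEq α] [DecidableEq β] [DecidableEq γ]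

lemma mutualInfo_congr (U : Ω → α) {V V' : Ω → β}
    (h : ∀ ω, μ ω ≠ 0 → V ω = V' ω) :
    mutualInfo μ U V = mutualInfo μ U V' := by
  unfold mutualInfo
  rw [entropy_congr h, entropy_congr (U := fun ω => (U ω, V ω)) (U' := fun ω => (U ω, V' ω))
    fun ω hω => by rw [h ω hω]]

lemma mutualInfo_comp_injective (U : Ω → α) (X : Ω → β) {f : β → γ} (hf : f.Injective) :
    mutualInfo μ U (fun ω => f (X ω)) = mutualInfo μ U X := by
  have hpair := entropy_comp_injective (μ := μ) (fun ω => (U ω, X ω))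
    (Function.injective_id.prodMap hf)
  simp only [Prod.map_apply, id] at hpair
  rw [mutualInfo, mutualInfo, entropy_comp_injective X hf, hpair]

lemma mutualInfo_comm (U : Ω → α) (V : Ω → β) : mutualInfo μ U V = mutualInfo μ V U := by
  have hswap := entropy_comp_injective (μ := μ) (fun ω => (V ω, U ω)) Prod.swap_injective
  simp only [Prod.swap_prod_mk] at hswap
  rw [mutualInfo, mutualInfo, hswap]
  ring

lemma IndepRV.mutualInfo_eq_zero (hμ : IsProb μ) {U : Ω → α} {V : Ω → β}
    (h : IndepRV μ U V) :
    mutualInfo μ U V = 0 := by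
  have hU : ∑ u, probOf μ U u = 1 := (sum_probOf U).trans hμ.2
  have hV : ∑ v, probOf μ V v = 1 := (sum_probOf V).trans hμ.2
  have hUV : ∀ u v, probOf μ (fun ω => (U ω, V ω)) (u, v) = probOf μ U u * probOf μ V v := h
  rw [mutualInfo, entropy_eq_sum_negMulLog (fun ω => (U ω, V ω)), Fintype.sum_prod_type]
  simp only [hUV, negMulLog_mul, sum_add_distrib, ← sum_mul, ← mul_sum, hU, hV,
    entropy_eq_sum_negMulLog]
  ring

lemma mutualInfo_nonneg (hμ : IsProb μ) (U : Ω → α) (V : Ω → β) :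
    0 ≤ mutualInfo μ U V := by
  have hU : ∑ u, probOf μ U u * log (probOf μ U u)
      = ∑ u, ∑ v, probOf μ (fun ω => (U ω, V ω)) (u, v) * log (probOf μ U u) :=
    sum_congr rfl fun u _ => by rw [← sum_mul, ← probOf_fst]
  have hV : ∑ v, probOf μ V v * log (probOf μ V v)
      = ∑ u, ∑ v, probOf μ (fun ω => (U ω, V ω)) (u, v) * log (probOf μ V v) := by
    rw [sum_comm]
    exact sum_congr rfl fun v _ => by rw [← sum_mul, ← probOf_snd]
  have hI : mutualInfo μ U V = -∑ u, ∑ v, probOf μ (fun ω => (U ω, V ω)) (u, v) *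
      (log (probOf μ U u) + log (probOf μ V v)
        - log (probOf μ (fun ω => (U ω, V ω)) (u, v))) := by
    rw [mutualInfo, entropy, entropy, entropy, hU, hV, Fintype.sum_prod_type]
    simp only [mul_sub, mul_add, sum_add_distrib, sum_sub_distrib]
    ring
  have hbound := sum_le_sum fun u (_ : u ∈ univ) => sum_le_sum fun v (_ : v ∈ univ) =>
    mul_log_add_log_sub_log_le (probOf_nonneg hμ.1 _ _)
      (probOf_pair_le_fst hμ.1 U V u v) (probOf_pair_le_snd hμ.1 U V u v)
  have hzero : ∑ u, ∑ v,
      (probOf μ U u * probOf μ V v - probOf μ (fun ω => (U ω, V ω)) (u, v)) = 0 := by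
    simp only [sum_sub_distrib, ← mul_sum, ← probOf_fst, ← sum_mul, sum_probOf, hμ.2]
    ring
  linarith

lemma mutualInfo_pair_eq_add (hμ : ∀ ω, 0 ≤ μ ω) (U : Ω → α) (W : Ω → β)
    (V : Ω → γ) :
    mutualInfo μ U (fun ω => (W ω, V ω)) = mutualInfo μ U V + condMutualInfo μ U W V := by
  have hassoc :
      entropy μ (fun ω => (U ω, W ω, V ω)) = entropy μ (fun ω => ((U ω, W ω), V ω)) :=
    (entropy_comp_injective (fun ω => (U ω, W ω, V ω))
      (Equiv.prodAssoc α β γ).symm.injective).symm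
  simp only [mutualInfo, condMutualInfo, mul_sub, mul_add, sum_add_distrib, sum_sub_distrib]
  rw [hassoc, entropy_pair_eq_add hμ W V, entropy_pair_eq_add hμ U V,
    entropy_pair_eq_add hμ (fun ω => (U ω, W ω)) V]
  ring

lemma condMutualInfo_nonneg (hμ : ∀ ω, 0 ≤ μ ω) (U : Ω → α) (W : Ω → β)
    (V : Ω → γ) :
    0 ≤ condMutualInfo μ U W V :=
  sum_nonneg fun v _ => by
    by_cases hv : probOf μ V v = 0
    · simp [hv]
    · exact mul_nonneg (probOf_nonneg hμ V v) (mutualInfo_nonneg (isProb_condWeight hμ V hv) U W)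

lemma mutualInfo_le_mutualInfo_pair (hμ : ∀ ω, 0 ≤ μ ω) (U : Ω → α) (W : Ω → β)
    (V : Ω → γ) :
    mutualInfo μ U W ≤ mutualInfo μ U (fun ω => (W ω, V ω)) :=
  calc mutualInfo μ U W ≤ mutualInfo μ U W + condMutualInfo μ U V W :=
        le_add_of_nonneg_right (condMutualInfo_nonneg hμ U V W)
    _ = mutualInfo μ U (fun ω => (V ω, W ω)) := (mutualInfo_pair_eq_add hμ U V W).symm
    _ = mutualInfo μ U (fun ω => (W ω, V ω)) := by
        simpa only [Prod.swap_prod_mk] using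
          mutualInfo_comp_injective U (fun ω => (W ω, V ω)) Prod.swap_injective

lemma mutualInfo_le_of_condMutualInfo_eq_zero (hμ : ∀ ω, 0 ≤ μ ω) {U : Ω → α}
    {W : Ω → β} {V : Ω → γ} (h : condMutualInfo μ U W V = 0) :
    mutualInfo μ U W ≤ mutualInfo μ U V :=
  calc mutualInfo μ U W ≤ mutualInfo μ U (fun ω => (W ω, V ω)) :=
        mutualInfo_le_mutualInfo_pair hμ U W V
    _ = mutualInfo μ U V := by rw [mutualInfo_pair_eq_add hμ, h, add_zero]

end

section
variable {Ω α β γ E τ : Type} [Fintype Ω] {μ : Ω → ℝ} [Fintype τ]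
  [DecidableEq E] [DecidableEq τ] {ε : Ω → E} {T : Ω → τ}

lemma IndepRV.comp [Fintype E] [DecidableEq β] [DecidableEq γ] (h : IndepRV μ ε T)
    (F : E → β) (g : τ → γ) :
    IndepRV μ (fun ω => F (ε ω)) (fun ω => g (T ω)) := by
  intro b c
  refine (probOf_comp (fun ω => (ε ω, T ω)) (Prod.map F g) (b, c)).trans ?_
  rw [probOf_comp ε F b, probOf_comp T g c, sum_mul_sum, Fintype.sum_prod_type]
  refine sum_congr rfl fun e _ => sum_congr rfl fun t _ => ?_
  rw [h e t]
  by_cases hb : F e = b <;> by_cases hc : g t = c <;> simp [hb, hc]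

lemma IndepRV.condWeight_comp [DecidableEq γ] (h : IndepRV μ ε T) (f : τ → γ) {s : γ}
    (hs : probOf μ (fun ω => f (T ω)) s ≠ 0) :
    IndepRV (condWeight μ (fun ω => f (T ω)) s) ε T := by
  set ps := probOf μ (fun ω => f (T ω)) s
  have hjoint : ∀ e t,
      probOf (condWeight μ (fun ω => f (T ω)) s) (fun ω => (ε ω, T ω)) (e, t)
      = if f t = s then probOf μ ε e * probOf μ T t / ps else 0 := fun e t => by
    rw [probOf_condWeight, show probOf μ (fun ω => ((ε ω, T ω), f (T ω))) ((e, t), s) = _ from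
      probOf_pair_comp_self (fun ω => (ε ω, T ω)) (fun x => f x.2) (e, t) s, h e t, ite_div,
      zero_div]
  have hT : ∀ t, probOf (condWeight μ (fun ω => f (T ω)) s) T t
      = if f t = s then probOf μ T t / ps else 0 := fun t => by
    rw [probOf_condWeight, probOf_pair_comp_self T f t s, ite_div, zero_div]
  have hε : ∀ e, probOf (condWeight μ (fun ω => f (T ω)) s) ε e = probOf μ ε e := fun e =>
    calc probOf (condWeight μ (fun ω => f (T ω)) s) ε e
        = probOf μ ε e / ps * ∑ t, if f t = s then probOf μ T t else 0 := by
          rw [probOf_fst ε T e, mul_sum]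
          exact sum_congr rfl fun t _ => by rw [hjoint]; split_ifs <;> ring
      _ = probOf μ ε e := by rw [← probOf_comp, div_mul_cancel₀ _ hs]
  intro e t
  rw [hjoint, hε, hT]
  split_ifs <;> ring

lemma condMutualInfo_eq_zero_of_indepRV [Fintype E] [Fintype α] [Fintype β] [Fintype γ]
    [DecidableEq α] [DecidableEq β] [DecidableEq γ] (hμ : ∀ ω, 0 ≤ μ ω)
    (h : IndepRV μ ε T) (a : τ → α) (f : τ → γ) (k : γ → E → β) :
    condMutualInfo μ (fun ω => a (T ω)) (fun ω => k (f (T ω)) (ε ω)) (fun ω => f (T ω))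
      = 0 := by
  refine sum_eq_zero fun v _ => ?_
  by_cases hv : probOf μ (fun ω => f (T ω)) v = 0
  · rw [hv, zero_mul]
  have hfibre : ∀ ω, condWeight μ (fun ω => f (T ω)) v ω ≠ 0 →
      k (f (T ω)) (ε ω) = k v (ε ω) := fun ω hω => by
    unfold condWeight at hω
    split_ifs at hω with hfv
    · rw [show f (T ω) = v from hfv]
    · exact absurd rfl hω
  rw [mutualInfo_congr _ hfibre, mutualInfo_comm,
    ((h.condWeight_comp f hv).comp (k v) a).mutualInfo_eq_zero (isProb_condWeight hμ _ hv),
    mul_zero]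

end

theorem stmt_0_general {Ω A E1 E2 E3 YT NDT DCT : Type}
    [Fintype Ω] [Fintype A] [Fintype E1] [Fintype E2] [Fintype E3]
    [Fintype YT] [Fintype NDT] [Fintype DCT]
    [DecidableEq A] [DecidableEq E1] [DecidableEq E2] [DecidableEq E3]
    [DecidableEq YT] [DecidableEq NDT] [DecidableEq DCT]
    (μ : Ω → ℝ) (hμ : IsProb μ)
    (pa : Ω → A) (ε1 : Ω → E1) (ε2 : Ω → E2) (ε3 : Ω → E3)
    (g1 : A → E1 → YT) (g2 : A → E2 → NDT) (g3 : YT → E3 → DCT)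
    (Y : Ω → YT) (nd : Ω → NDT) (dc : Ω → DCT)
    (hY : ∀ ω, Y ω = g1 (pa ω) (ε1 ω))
    (hnd : ∀ ω, nd ω = g2 (pa ω) (ε2 ω))
    (hdc : ∀ ω, dc ω = g3 (Y ω) (ε3 ω))
    (h3 : IndepRV μ ε3 (fun ω => (pa ω, ε1 ω, ε2 ω))) :
    mutualInfo μ pa (fun ω => (nd ω, dc ω)) ≤
      mutualInfo μ pa (fun ω => (nd ω, Y ω)) := by
  let T : Ω → A × E1 × E2 := fun ω => (pa ω, ε1 ω, ε2 ω)
  let f : A × E1 × E2 → NDT × YT := fun t => (g2 t.1 t.2.2, g1 t.1 t.2.1)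
  let k : NDT × YT → E3 → NDT × DCT := fun v e => (v.1, g3 v.2 e)
  have hV : (fun ω => (nd ω, Y ω)) = fun ω => f (T ω) :=
    funext fun ω => by simp [f, T, hnd, hY]
  have hW : (fun ω => (nd ω, dc ω)) = fun ω => k (f (T ω)) (ε3 ω) :=
    funext fun ω => by simp [k, f, T, hnd, hY, hdc]
  rw [hV, hW]
  exact mutualInfo_le_of_condMutualInfo_eq_zero hμ.1
    (condMutualInfo_eq_zero_of_indepRV hμ.1 h3 Prod.fst f k)

/-- In the SCM `Y = g1(pa, ε1)`, `nd = g2(pa, ε2)`, `dc = g3(Y, ε3)`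
with the stated independences, `I(pa; (nd, dc)) ≤ I(pa; (nd, Y))`. -/
theorem stmt_0 {Ω A E1 E2 E3 YT NDT DCT : Type}
    [Fintype Ω] [Fintype A] [Fintype E1] [Fintype E2] [Fintype E3]
    [Fintype YT] [Fintype NDT] [Fintype DCT]
    [DecidableEq A] [DecidableEq E1] [DecidableEq E2] [DecidableEq E3]
    [DecidableEq YT] [DecidableEq NDT] [DecidableEq DCT]
    (μ : Ω → ℝ) (hμ : IsProb μ)
    (pa : Ω → A) (ε1 : Ω → E1) (ε2 : Ω → E2) (ε3 : Ω → E3)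
    (g1 : A → E1 → YT) (g2 : A → E2 → NDT) (g3 : YT → E3 → DCT)
    (Y : Ω → YT) (nd : Ω → NDT) (dc : Ω → DCT)
    (hY : ∀ ω, Y ω = g1 (pa ω) (ε1 ω))
    (hnd : ∀ ω, nd ω = g2 (pa ω) (ε2 ω))
    (hdc : ∀ ω, dc ω = g3 (Y ω) (ε3 ω))
    (h1 : IndepRV μ ε1 pa)
    (h2 : IndepRV μ ε2 (fun ω => (pa ω, ε1 ω)))
    (h3 : IndepRV μ ε3 (fun ω => (pa ω, ε1 ω, ε2 ω))) :
    mutualInfo μ pa (fun ω => (nd ω, dc ω)) ≤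
      mutualInfo μ pa (fun ω => (nd ω, Y ω)) :=
  stmt_0_general μ hμ pa ε1 ε2 ε3 g1 g2 g3 Y nd dc hY hnd hdc h3
end

section
/- Let ρ be a probability distribution on a finite set S and let ρ̂ be the empirical distribution obtained from m i.i.d. samples drawn from ρ. Then for every δ ∈ (0,1), with probability at least 1 − δ: ‖ρ − ρ̂‖₂ ≤ (2 + √(2·log(1/δ))) / √m, where ‖·‖₂ is the Euclidean norm of the vector of pointwise differences. -/
/-!
Replacing one sample moves `ρ̂` by `√2 / m` in `ℓ²`, so `D(s) = ‖ρ - ρ̂‖₂` has bounded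
differences and McDiarmid's inequality gives `D ≤ 𝔼 D + ε` with probability at least
`1 - exp (-m ε²)`. McDiarmid is proved for product weights by induction on `m`: conditioning on the
first sample, Hoeffding's lemma bounds the moment generating function of the remaining fluctuation.
The mean is small by Jensen: `𝔼 D ≤ √(𝔼 D²) = √(∑ₐ ρ(a)(1 - ρ(a)) / m) ≤ 1 / √m`, and the
remaining slack `(1 + √(2 log (1/δ))) / √m` makes `exp (-m ε²) ≤ δ`.
-/

open Finset

/-- The empirical distribution of `m` samples `s : Fin m → S`. -/
noncomputable def empDist {S : Type} [DecidableEq S]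
    {m : ℕ} (s : Fin m → S) (a : S) : ℝ :=
  ((Finset.univ.filter fun i => s i = a).card : ℝ) / (m : ℝ)

open Real

theorem sum_mul_exp_sub_le_of_sub_le {ι : Type*} [Fintype ι] {w X : ι → ℝ}
    (hw0 : ∀ i, 0 ≤ w i) (hw1 : ∑ i, w i = 1) {c : ℝ} (hX : ∀ i j, X i - X j ≤ c) (t : ℝ) :
    ∑ i, w i * exp (t * (X i - ∑ j, w j * X j)) ≤ exp (t ^ 2 * c ^ 2 / 8) := by
  obtain ⟨i₀, -, -⟩ := exists_ne_zero_of_sum_ne_zero (hw1 ▸ one_ne_zero : ∑ i, w i ≠ 0)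
  obtain ⟨j, -, hj⟩ := exists_min_image univ X ⟨i₀, mem_univ _⟩
  have hXmem (i : ι) : X i ∈ Set.Icc (X j) (X j + c) :=
    ⟨hj i (mem_univ _), by linarith [hX i j]⟩
  let _ : MeasurableSpace ι := ⊤
  let p : PMF ι := PMF.ofFintype (fun i => ENNReal.ofReal (w i)) (by
    rw [← ENNReal.ofReal_sum_of_nonneg fun i _ => hw0 i, hw1, ENNReal.ofReal_one])
  have hp (g : ι → ℝ) : ∫ i, g i ∂p.toMeasure = ∑ i, w i * g i := by
    simp [p, PMF.integral_eq_sum, ENNReal.toReal_ofReal (hw0 _)]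
  have hoeffding := (ProbabilityTheory.hasSubgaussianMGF_of_mem_Icc (μ := p.toMeasure)
    measurable_from_top.aemeasurable (MeasureTheory.ae_of_all _ hXmem)).mgf_le t
  simp only [ProbabilityTheory.mgf, hp] at hoeffding
  convert hoeffding using 2
  simp only [NNReal.coe_pow, NNReal.coe_div, coe_nnnorm, norm_eq_abs, NNReal.coe_ofNat, div_pow,
    sq_abs, add_sub_cancel_left]
  ring

section ProductWeights

variable {S : Type*} [Fintype S] (ρ : S → ℝ)

noncomputable def piMean {m : ℕ} (f : (Fin m → S) → ℝ) : ℝ := ∑ s, (∏ i, ρ (s i)) * f s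

variable {ρ}

theorem piMean_succ {m : ℕ} (f : (Fin (m + 1) → S) → ℝ) :
    piMean ρ f = piMean ρ fun t => ∑ a, ρ a * f (Fin.cons a t) := by
  simp only [piMean, ← (Fin.consEquiv fun _ => S).sum_comp, Fintype.sum_prod_type,
    Fin.consEquiv, Equiv.coe_fn_mk, Fin.prod_univ_succ, Fin.cons_zero, Fin.cons_succ, mul_sum]
  rw [sum_comm]
  exact sum_congr rfl fun t _ => sum_congr rfl fun a _ => by ring

theorem piMean_add {m : ℕ} (f g : (Fin m → S) → ℝ) :
    piMean ρ (fun s => f s + g s) = piMean ρ f + piMean ρ g := by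
  simp only [piMean, mul_add, sum_add_distrib]

theorem piMean_const_mul {m : ℕ} (c : ℝ) (f : (Fin m → S) → ℝ) :
    piMean ρ (fun s => c * f s) = c * piMean ρ f := by
  simp only [piMean, mul_sum]
  exact sum_congr rfl fun s _ => by ring

theorem piMean_sum {ι : Type*} {m : ℕ} (t : Finset ι) (f : ι → (Fin m → S) → ℝ) :
    piMean ρ (fun s => ∑ k ∈ t, f k s) = ∑ k ∈ t, piMean ρ (f k) := by
  simp only [piMean, mul_sum]
  exact sum_comm

theorem piMean_const (hρ1 : ∑ a, ρ a = 1) {m : ℕ} (c : ℝ) :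
    piMean ρ (fun _ : Fin m → S => c) = c := by
  induction m with
  | zero => simp [piMean]
  | succ m ih => simp [piMean_succ, ← sum_mul, hρ1, ih]

theorem sum_prod_eq_one (hρ1 : ∑ a, ρ a = 1) (m : ℕ) : ∑ s : Fin m → S, ∏ i, ρ (s i) = 1 := by
  simpa [piMean] using piMean_const (m := m) hρ1 1

theorem piMean_mono (hρ0 : ∀ a, 0 ≤ ρ a) {m : ℕ} {f g : (Fin m → S) → ℝ}
    (hfg : ∀ s, f s ≤ g s) : piMean ρ f ≤ piMean ρ g :=
  sum_le_sum fun s _ => mul_le_mul_of_nonneg_left (hfg s) (prod_nonneg fun _ _ => hρ0 _)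

theorem piMean_sq_sum_of_sum_mul_eq_zero (hρ1 : ∑ a, ρ a = 1) {Y : S → ℝ}
    (hY : ∑ a, ρ a * Y a = 0) (m : ℕ) :
    piMean ρ (fun s : Fin m → S => (∑ j, Y (s j)) ^ 2) = m * ∑ a, ρ a * Y a ^ 2 := by
  induction m with
  | zero => simp [piMean_const hρ1]
  | succ m ih =>
    have hslice (z : ℝ) : ∑ a, ρ a * (Y a + z) ^ 2 = ∑ a, ρ a * Y a ^ 2 + z ^ 2 := by
      calc ∑ a, ρ a * (Y a + z) ^ 2
          = ∑ a, ρ a * Y a ^ 2 + 2 * z * ∑ a, ρ a * Y a + z ^ 2 * ∑ a, ρ a := by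
            simp only [mul_sum, ← sum_add_distrib]
            exact sum_congr rfl fun a _ => by ring
        _ = ∑ a, ρ a * Y a ^ 2 + z ^ 2 := by rw [hY, hρ1]; ring
    simp only [piMean_succ, Fin.sum_univ_succ, Fin.cons_zero, Fin.cons_succ, hslice,
      piMean_add, piMean_const hρ1, ih]
    push_cast
    ring

theorem piMean_sqrt_le (hρ0 : ∀ a, 0 ≤ ρ a) (hρ1 : ∑ a, ρ a = 1) {m : ℕ}
    {g : (Fin m → S) → ℝ} (hg : ∀ s, 0 ≤ g s) :
    piMean ρ (fun s => √(g s)) ≤ √(piMean ρ g) :=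
  strictConcaveOn_sqrt.concaveOn.le_map_sum (fun _ _ => prod_nonneg fun _ _ => hρ0 _)
    (sum_prod_eq_one hρ1 m) fun s _ => hg s

theorem one_sub_exp_mul_piMean_le (hρ0 : ∀ a, 0 ≤ ρ a) (hρ1 : ∑ a, ρ a = 1) {m : ℕ}
    (g : (Fin m → S) → ℝ) {l : ℝ} (hl : 0 ≤ l) (t : ℝ) :
    1 - exp (-(l * t)) * piMean ρ (fun s => exp (l * g s)) ≤
      ∑ s, if g s ≤ t then ∏ i, ρ (s i) else 0 := by
  have hpt (s : Fin m → S) : ∏ i, ρ (s i) ≤ (if g s ≤ t then ∏ i, ρ (s i) else 0) +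
      exp (-(l * t)) * ((∏ i, ρ (s i)) * exp (l * g s)) := by
    have hw : 0 ≤ ∏ i, ρ (s i) := prod_nonneg fun _ _ => hρ0 _
    split_ifs with hgt
    · exact le_add_of_nonneg_right (by positivity)
    · have hexp : 1 ≤ exp (-(l * t)) * exp (l * g s) := by
        rw [← exp_add]
        exact one_le_exp (by nlinarith)
      nlinarith
  have hsum := sum_le_sum fun s (_ : s ∈ univ) => hpt s
  rw [sum_prod_eq_one hρ1, sum_add_distrib, ← mul_sum] at hsum
  rw [piMean]
  linarith

theorem piMean_exp_mul_sub_piMean_le (hρ0 : ∀ a, 0 ≤ ρ a) (hρ1 : ∑ a, ρ a = 1) {c : ℝ}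
    (l : ℝ) {m : ℕ} (f : (Fin m → S) → ℝ) (hf : ∀ s i b, |f s - f (Function.update s i b)| ≤ c) :
    piMean ρ (fun s => exp (l * (f s - piMean ρ f))) ≤ exp (m * (l ^ 2 * c ^ 2 / 8)) := by
  induction m with
  | zero => simp [piMean, Subsingleton.elim _ (Fin.elim0 : Fin 0 → S)]
  | succ m ih =>
    set μ := piMean ρ f
    let F : (Fin m → S) → ℝ := fun t => ∑ a, ρ a * f (Fin.cons a t)
    have hμ : μ = piMean ρ F := piMean_succ f
    have hF (t i b) : |F t - F (Function.update t i b)| ≤ c := by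
      calc |F t - F (Function.update t i b)|
          = |∑ a, ρ a * (f (Fin.cons a t) - f (Function.update (Fin.cons a t) i.succ b))| := by
            simp only [F, Fin.cons_update, mul_sub, sum_sub_distrib]
        _ ≤ ∑ a, ρ a * c := by
            refine (abs_sum_le_sum_abs _ _).trans (sum_le_sum fun a _ => ?_)
            rw [abs_mul, abs_of_nonneg (hρ0 a)]
            exact mul_le_mul_of_nonneg_left (hf _ _ _) (hρ0 a)
        _ = c := by rw [← sum_mul, hρ1, one_mul]
    have hfirst (t : Fin m → S) :
        ∑ a, ρ a * exp (l * (f (Fin.cons a t) - F t)) ≤ exp (l ^ 2 * c ^ 2 / 8) := by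
      refine sum_mul_exp_sub_le_of_sub_le hρ0 hρ1 (fun a a' => ?_) l
      have := (le_abs_self _).trans (hf (Fin.cons a t) 0 a')
      rwa [Fin.update_cons_zero] at this
    calc piMean ρ (fun s => exp (l * (f s - μ)))
        = piMean ρ fun t => exp (l * (F t - μ)) *
            ∑ a, ρ a * exp (l * (f (Fin.cons a t) - F t)) := by
          rw [piMean_succ]
          congr 1; funext t
          rw [mul_sum]
          refine sum_congr rfl fun a _ => ?_
          rw [mul_left_comm, ← exp_add]
          congr 2; ring
      _ ≤ piMean ρ fun t => exp (l ^ 2 * c ^ 2 / 8) * exp (l * (F t - μ)) :=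
          piMean_mono hρ0 fun t => by
            rw [mul_comm]; exact mul_le_mul_of_nonneg_right (hfirst t) (exp_nonneg _)
      _ ≤ exp (l ^ 2 * c ^ 2 / 8) * exp (m * (l ^ 2 * c ^ 2 / 8)) := by
          rw [piMean_const_mul, hμ]
          exact mul_le_mul_of_nonneg_left (ih F hF) (exp_nonneg _)
      _ = exp ((m + 1 : ℕ) * (l ^ 2 * c ^ 2 / 8)) := by
          rw [← exp_add]; push_cast; congr 1; ring

theorem one_sub_exp_le_sum_ite_sub_piMean_le (hρ0 : ∀ a, 0 ≤ ρ a) (hρ1 : ∑ a, ρ a = 1)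
    {m : ℕ} (hm : 0 < m) {f : (Fin m → S) → ℝ} {c : ℝ} (hc : 0 < c)
    (hf : ∀ s i b, |f s - f (Function.update s i b)| ≤ c) {ε : ℝ} (hε : 0 ≤ ε) :
    1 - exp (-(2 * ε ^ 2 / (m * c ^ 2))) ≤
      ∑ s, if f s - piMean ρ f ≤ ε then ∏ i, ρ (s i) else 0 := by
  -- the Chernoff parameter minimising `-l ε + m l² c² / 8`
  set l := 4 * ε / (m * c ^ 2)
  have hl : 0 ≤ l := by positivity
  refine le_trans ?_ (one_sub_exp_mul_piMean_le hρ0 hρ1 (fun s => f s - piMean ρ f) hl ε)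
  have hexp :
      exp (-(l * ε)) * exp (m * (l ^ 2 * c ^ 2 / 8)) = exp (-(2 * ε ^ 2 / (m * c ^ 2))) := by
    rw [← exp_add]
    congr 1
    simp only [l]
    field_simp
    ring
  rw [← hexp]
  gcongr
  exact piMean_exp_mul_sub_piMean_le hρ0 hρ1 l f hf

end ProductWeights

theorem abs_sqrt_sum_sq_sub_sub_le {S : Type*} [Fintype S] (x y z : S → ℝ) :
    |√(∑ a, (x a - y a) ^ 2) - √(∑ a, (x a - z a) ^ 2)| ≤ √(∑ a, (y a - z a) ^ 2) := by
  have hdist (u v : S → ℝ) :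
      √(∑ a, (u a - v a) ^ 2) = dist (WithLp.toLp 2 u : EuclideanSpace ℝ S) (WithLp.toLp 2 v) := by
    simp [EuclideanSpace.dist_eq, dist_eq, sq_abs]
  rw [hdist, hdist, hdist, dist_comm (WithLp.toLp 2 x), dist_comm (WithLp.toLp 2 x)]
  exact abs_dist_sub_le _ _ _

section EmpiricalDistribution

variable {S : Type} [DecidableEq S]

theorem empDist_eq_sum {m : ℕ} (s : Fin m → S) (a : S) :
    empDist s a = (∑ j, if s j = a then 1 else 0) / m := by
  rw [empDist, sum_boole]

theorem empDist_sub_empDist_update {m : ℕ} (s : Fin m → S) (i : Fin m) (b a : S) :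
    empDist s a - empDist (Function.update s i b) a =
      ((if s i = a then 1 else 0) - (if b = a then 1 else 0)) / m := by
  rw [empDist_eq_sum, empDist_eq_sum, ← sub_div, ← sum_sub_distrib,
    sum_eq_single i (fun j _ hj => by rw [Function.update_of_ne hj, sub_self]) (by simp),
    Function.update_self]

variable [Fintype S] {ρ : S → ℝ}

theorem piMean_sq_sub_empDist (hρ1 : ∑ a, ρ a = 1) {m : ℕ} (hm : 0 < m) (a : S) :
    piMean ρ (fun s : Fin m → S => (ρ a - empDist s a) ^ 2) = ρ a * (1 - ρ a) / m := by
  let Y : S → ℝ := fun b => (if b = a then 1 else 0) - ρ a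
  have hY : ∑ b, ρ b * Y b = 0 := by simp [Y, mul_sub, sum_sub_distrib, ← sum_mul, hρ1]
  have hY2 : ∑ b, ρ b * Y b ^ 2 = ρ a * (1 - ρ a) := by
    have hpt (b : S) :
        ρ b * Y b ^ 2 = (1 - 2 * ρ a) * (if b = a then ρ b else 0) + ρ a ^ 2 * ρ b := by
      simp only [Y]; split_ifs <;> ring
    simp only [hpt, sum_add_distrib, ← mul_sum, sum_ite_eq', mem_univ, if_true, hρ1]
    ring
  have hpt (s : Fin m → S) : (ρ a - empDist s a) ^ 2 = (m ^ 2 : ℝ)⁻¹ * (∑ j, Y (s j)) ^ 2 := by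
    have hm' : (m : ℝ) ≠ 0 := by positivity
    simp only [Y, empDist_eq_sum, sum_sub_distrib, sum_const, card_univ, Fintype.card_fin,
      nsmul_eq_mul]
    field_simp
    ring
  simp only [hpt, piMean_const_mul, piMean_sq_sum_of_sum_mul_eq_zero hρ1 hY, hY2]
  field_simp

theorem piMean_sqrt_sum_sq_sub_empDist_le (hρ0 : ∀ a, 0 ≤ ρ a) (hρ1 : ∑ a, ρ a = 1) {m : ℕ}
    (hm : 0 < m) : piMean ρ (fun s : Fin m → S => √(∑ a, (ρ a - empDist s a) ^ 2)) ≤ 1 / √m := by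
  have hvar : piMean ρ (fun s : Fin m → S => ∑ a, (ρ a - empDist s a) ^ 2) ≤ 1 / m := by
    rw [piMean_sum]
    simp only [piMean_sq_sub_empDist hρ1 hm]
    calc ∑ a, ρ a * (1 - ρ a) / m ≤ ∑ a, ρ a / m :=
          sum_le_sum fun a _ => by gcongr; nlinarith [hρ0 a]
      _ = 1 / m := by rw [← sum_div, hρ1]
  calc piMean ρ (fun s : Fin m → S => √(∑ a, (ρ a - empDist s a) ^ 2))
      ≤ √(piMean ρ fun s : Fin m → S => ∑ a, (ρ a - empDist s a) ^ 2) :=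
        piMean_sqrt_le hρ0 hρ1 fun s => sum_nonneg fun a _ => sq_nonneg _
    _ ≤ √(1 / m) := sqrt_le_sqrt hvar
    _ = 1 / √m := by rw [one_div, one_div, sqrt_inv]

theorem sqrt_sum_sq_empDist_sub_empDist_update_le {m : ℕ} (s : Fin m → S) (i : Fin m) (b : S) :
    √(∑ a, (empDist s a - empDist (Function.update s i b) a) ^ 2) ≤ √2 / m := by
  have hind (x y : ℝ) (hx : x = 0 ∨ x = 1) (hy : y = 0 ∨ y = 1) : (x - y) ^ 2 ≤ x + y := by
    rcases hx with rfl | rfl <;> rcases hy with rfl | rfl <;> norm_num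
  have hsum : ∑ a, ((if s i = a then (1 : ℝ) else 0) - (if b = a then 1 else 0)) ^ 2 ≤ 2 :=
    calc _ ≤ ∑ a, ((if s i = a then (1 : ℝ) else 0) + (if b = a then 1 else 0)) :=
          sum_le_sum fun a _ => hind _ _ (by split_ifs <;> simp) (by split_ifs <;> simp)
      _ = 2 := by simp only [sum_add_distrib, sum_ite_eq, mem_univ, if_true]; norm_num
  calc √(∑ a, (empDist s a - empDist (Function.update s i b) a) ^ 2)
      ≤ √(2 / m ^ 2) := by
        simp only [empDist_sub_empDist_update, div_pow, ← sum_div]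
        gcongr
    _ = √2 / m := by rw [sqrt_div' _ (by positivity), sqrt_sq (Nat.cast_nonneg m)]

end EmpiricalDistribution

theorem stmt_11_general {S : Type} [Fintype S] [DecidableEq S]
    (ρ : S → ℝ) (hρ0 : ∀ a, 0 ≤ ρ a) (hρ1 : (∑ a, ρ a) = 1)
    (m : ℕ) (hm : 0 < m) (δ : ℝ) (hδ0 : 0 < δ) :
    1 - δ ≤ ∑ s : Fin m → S,
      (if Real.sqrt (∑ a, (ρ a - empDist s a) ^ 2) ≤
          (2 + Real.sqrt (2 * Real.log (1 / δ))) / Real.sqrt (m : ℝ)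
        then ∏ i, ρ (s i) else 0) := by
  set f : (Fin m → S) → ℝ := fun s => √(∑ a, (ρ a - empDist s a) ^ 2)
  set L := log (1 / δ)
  set ε := (2 + √(2 * L)) / √m - piMean ρ f
  have hsm : 0 < √(m : ℝ) := by positivity
  have hε : 1 + √(2 * L) ≤ √m * ε := by
    have hmean : √m * piMean ρ f ≤ 1 := by
      have := piMean_sqrt_sum_sq_sub_empDist_le hρ0 hρ1 hm
      rwa [le_div_iff₀ hsm, mul_comm] at this
    simp only [ε, mul_sub, mul_div_cancel₀ _ hsm.ne']
    linarith
  have hε0 : 0 ≤ ε := nonneg_of_mul_nonneg_right (le_trans (by positivity) hε) hsm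
  have hdiff (s : Fin m → S) (i : Fin m) (b : S) : |f s - f (Function.update s i b)| ≤ √2 / m :=
    (abs_sqrt_sum_sq_sub_sub_le _ _ _).trans (sqrt_sum_sq_empDist_sub_empDist_update_le s i b)
  have htail := one_sub_exp_le_sum_ite_sub_piMean_le hρ0 hρ1 hm (by positivity) hdiff hε0
  have hL : L ≤ m * ε ^ 2 := calc
    L ≤ √(2 * L) ^ 2 := by
      rw [sq_sqrt']
      exact (le_total 0 L).elim (fun h => le_max_of_le_left (by linarith)) le_max_of_le_right
    _ ≤ (√m * ε) ^ 2 := by gcongr; linarith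
    _ = m * ε ^ 2 := by rw [mul_pow, sq_sqrt (Nat.cast_nonneg m)]
  have hδ : exp (-(2 * ε ^ 2 / (m * (√2 / m) ^ 2))) ≤ δ := calc
    exp (-(2 * ε ^ 2 / (m * (√2 / m) ^ 2))) = exp (-(m * ε ^ 2)) := by
      rw [div_pow, sq_sqrt zero_le_two]
      field_simp
    _ ≤ exp (-L) := by gcongr
    _ = δ := by simp only [L, one_div, log_inv, neg_neg, exp_log hδ0]
  simp only [ε, sub_le_sub_iff_right] at htail
  linarith

/-- for a distribution `ρ` on a finite set and the empirical
distribution `ρ̂` from `m` i.i.d. samples, for every `δ ∈ (0,1)`, with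
probability at least `1 − δ`, `‖ρ − ρ̂‖₂ ≤ (2 + √(2·log(1/δ)))/√m`. -/
theorem stmt_11 {S : Type} [Fintype S] [DecidableEq S]
    (ρ : S → ℝ) (hρ0 : ∀ a, 0 ≤ ρ a) (hρ1 : (∑ a, ρ a) = 1)
    (m : ℕ) (hm : 0 < m) (δ : ℝ) (hδ0 : 0 < δ) (hδ1 : δ < 1) :
    1 - δ ≤ ∑ s : Fin m → S,
      (if Real.sqrt (∑ a, (ρ a - empDist s a) ^ 2) ≤
          (2 + Real.sqrt (2 * Real.log (1 / δ))) / Real.sqrt (m : ℝ)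
        then ∏ i, ρ (s i) else 0) :=
  stmt_11_general ρ hρ0 hρ1 m hm δ hδ0
end

section
/- Define h: [0,∞) → ℝ by h(0) = 0, h(x) = x·log(1/x) for 0 < x ≤ 1/e, and h(x) = 1/e for x > 1/e (natural logarithm). Then for all a, b ∈ [0,1]: |a·log(a) − b·log(b)| ≤ h(|a − b|), with the convention 0·log 0 = 0. -/
open Finset

/-- The function `h : [0,∞) → ℝ` with `h(0) = 0`, `h(x) = x·log(1/x)` for
`0 < x ≤ 1/e`, and `h(x) = 1/e` for `x > 1/e` (natural logarithm). -/
noncomputable def hFun (x : ℝ) : ℝ :=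
  if x = 0 then 0
  else if x ≤ 1 / Real.exp 1 then x * Real.log (1 / x)
  else 1 / Real.exp 1

/-- `−x log x ≤ 1/e` for `x > 0`. -/
lemma aux_neg_mul_log_le (x : ℝ) (hx : 0 < x) : -(x * Real.log x) ≤ 1 / Real.exp 1 := by
  have he : (0:ℝ) < Real.exp 1 := Real.exp_pos 1
  have h1 : Real.log (1 / (x * Real.exp 1)) ≤ 1 / (x * Real.exp 1) - 1 :=
    Real.log_le_sub_one_of_pos (by positivity)
  rw [Real.log_div one_ne_zero (by positivity), Real.log_one,
    Real.log_mul (ne_of_gt hx) (ne_of_gt he), Real.log_exp] at h1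
  have h2 : -Real.log x ≤ 1 / (x * Real.exp 1) := by linarith
  have h3 : x * -Real.log x ≤ x * (1 / (x * Real.exp 1)) :=
    mul_le_mul_of_nonneg_left h2 hx.le
  have h4 : x * (1 / (x * Real.exp 1)) = 1 / Real.exp 1 := by
    field_simp
  linarith [h3, h4 ▸ h3]

/-- superadditivity of `x log x` on nonnegatives. -/
lemma aux_superadd (x y : ℝ) (hx : 0 ≤ x) (hy : 0 ≤ y) :
    x * Real.log x + y * Real.log y ≤ (x + y) * Real.log (x + y) := by
  rcases eq_or_lt_of_le hx with h | hx'
  · simp [← h]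
  rcases eq_or_lt_of_le hy with h | hy'
  · simp [← h]
  have h1 : x * Real.log x ≤ x * Real.log (x + y) :=
    mul_le_mul_of_nonneg_left (Real.log_le_log hx' (by linarith)) hx
  have h2 : y * Real.log y ≤ y * Real.log (x + y) :=
    mul_le_mul_of_nonneg_left (Real.log_le_log hy' (by linarith)) hy
  nlinarith

/-- `x ↦ x log x − x` is antitone on `[0,1]`. -/
lemma aux_antitone : AntitoneOn (fun x : ℝ => x * Real.log x - x) (Set.Icc 0 1) := by
  apply antitoneOn_of_deriv_nonpos (convex_Icc 0 1)
  · exact (Real.continuous_mul_log.sub continuous_id).continuousOn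
  · intro x hx
    rw [interior_Icc] at hx
    have h : HasDerivAt (fun x : ℝ => x * Real.log x - x) (Real.log x + 1 - 1) x :=
      (Real.hasDerivAt_mul_log (ne_of_gt hx.1)).sub (hasDerivAt_id x)
    exact h.differentiableAt.differentiableWithinAt
  · intro x hx
    rw [interior_Icc] at hx
    have h : HasDerivAt (fun x : ℝ => x * Real.log x - x) (Real.log x + 1 - 1) x :=
      (Real.hasDerivAt_mul_log (ne_of_gt hx.1)).sub (hasDerivAt_id x)
    rw [h.deriv]
    have := Real.log_nonpos hx.1.le hx.2.le
    linarith

/-- main inequality for ordered case -/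
lemma aux_main (a b : ℝ) (hb0 : 0 ≤ b) (hba : b ≤ a) (ha1 : a ≤ 1) :
    |a * Real.log a - b * Real.log b| ≤ hFun (a - b) := by
  obtain ⟨d, hd⟩ : ∃ d : ℝ, d = a - b := ⟨a - b, rfl⟩
  rw [← hd]
  have hd0 : 0 ≤ d := by linarith
  rcases eq_or_lt_of_le hd0 with h0 | hd'
  · have hab : a = b := by linarith
    simp [hFun, hab, ← h0]
  have hdne : d ≠ 0 := ne_of_gt hd'
  rw [hFun, if_neg hdne]
  have ha0 : 0 < a := by linarith
  have hb1 : b ≤ 1 := by linarith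
  by_cases hde : d ≤ 1 / Real.exp 1
  · rw [if_pos hde]
    have hlog1 : (1:ℝ) ≤ Real.log (1 / d) := by
      rw [Real.log_div one_ne_zero hdne, Real.log_one]
      have : Real.log d ≤ Real.log (1 / Real.exp 1) := Real.log_le_log hd' hde
      rw [Real.log_div one_ne_zero (ne_of_gt (Real.exp_pos 1)), Real.log_one,
        Real.log_exp] at this
      linarith
    have hdle : d ≤ d * Real.log (1 / d) := by
      nlinarith
    rw [abs_le]
    constructor
    · -- b log b − a log a ≤ d log(1/d), i.e. lower bound
      have hsup := aux_superadd b d hb0 hd0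
      have hba' : b + d = a := by linarith
      rw [hba'] at hsup
      have : -(d * Real.log d) = d * Real.log (1 / d) := by
        rw [Real.log_div one_ne_zero hdne, Real.log_one]; ring
      linarith
    · -- a log a − b log b ≤ d ≤ d log(1/d)
      have hant := aux_antitone (Set.mem_Icc.mpr ⟨hb0, hb1⟩)
        (Set.mem_Icc.mpr ⟨by linarith, ha1⟩) hba
      simp only at hant
      linarith
  · rw [if_neg hde]
    have ha := aux_neg_mul_log_le a ha0
    have hA : 0 ≤ -(a * Real.log a) := by
      have := Real.log_nonpos ha0.le ha1
      nlinarith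
    have hB : 0 ≤ -(b * Real.log b) := by
      have := Real.log_nonpos hb0 hb1
      nlinarith
    have hb' : -(b * Real.log b) ≤ 1 / Real.exp 1 := by
      rcases eq_or_lt_of_le hb0 with h | hb''
      · simp [← h]; positivity
      · exact aux_neg_mul_log_le b hb''
    rw [abs_le]
    constructor <;> linarith

/-- for all `a, b ∈ [0,1]`,
`|a·log a − b·log b| ≤ h(|a − b|)` (with `0·log 0 = 0`, which holds since
`Real.log 0 = 0`). -/
theorem stmt_12 (a b : ℝ) (ha0 : 0 ≤ a) (ha1 : a ≤ 1) (hb0 : 0 ≤ b) (hb1 : b ≤ 1) :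
    |a * Real.log a - b * Real.log b| ≤ hFun |a - b| := by
  rcases le_total b a with h | h
  · rw [show |a - b| = a - b from abs_of_nonneg (by linarith)]
    exact aux_main a b hb0 h ha1
  · rw [show |a - b| = b - a from by rw [abs_sub_comm]; exact abs_of_nonneg (by linarith),
      abs_sub_comm]
    exact aux_main b a ha0 h hb1
end

section
/- Let p and q be probability distributions on a finite set 𝒴, with Shannon entropies H(p) = −Σ_y p(y)·log p(y) and H(q) = −Σ_y q(y)·log q(y). Then |H(p) − H(q)| ≤ Σ_y h(|p(y) − q(y)|), where h(0) = 0, h(x) = x·log(1/x) for 0 < x ≤ 1/e, and h(x) = 1/e for x > 1/e. -/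
open Finset

/-!
Writing `f x = -x log x`, each entropy is `∑ y, f (p y)`, so it suffices to bound
`|f a - f b|` by `h |a - b|` for `a, b ∈ [0, 1]`. Let `a ≤ b` and `d = b - a`.
Since `f` is concave with `f 0 = 0` it is subadditive, so `f b - f a ≤ f d`; and
`f a - f b ≤ a log (b / a) ≤ d`. When `d ≤ 1/e` we have `d ≤ f d = h d`. When
`d > 1/e` we only use that `f` takes values in `[0, 1/e]` on `[0, 1]`.
-/

namespace Real

lemma negMulLog_le_exp_neg_one {x : ℝ} (hx : 0 ≤ x) : negMulLog x ≤ exp (-1) := by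
  rcases hx.eq_or_lt with rfl | hx
  · simp [(exp_pos _).le]
  · simpa [negMulLog, exp_log hx, mul_comm] using mul_exp_neg_le_exp_neg_one (-log x)

lemma negMulLog_add_le {a b : ℝ} (ha : 0 ≤ a) (hb : 0 ≤ b) :
    negMulLog (a + b) ≤ negMulLog a + negMulLog b := by
  have log_le {x : ℝ} (hx : 0 ≤ x) (hxb : x ≤ a + b) : x * log x ≤ x * log (a + b) := by
    rcases hx.eq_or_lt with rfl | hx
    · simp
    · exact mul_le_mul_of_nonneg_left (log_le_log hx hxb) hx.le
  simp only [negMulLog, neg_mul, add_mul]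
  linarith [log_le ha (le_add_of_nonneg_right hb), log_le hb (le_add_of_nonneg_left ha)]

lemma negMulLog_sub_negMulLog_le_sub {a b : ℝ} (ha : 0 ≤ a) (hab : a ≤ b) (hb : b ≤ 1) :
    negMulLog a - negMulLog b ≤ b - a := by
  rcases ha.eq_or_lt with rfl | ha
  · simp only [negMulLog_zero, zero_sub, sub_zero]
    linarith [negMulLog_nonneg hab hb]
  have hb0 : 0 < b := ha.trans_le hab
  calc negMulLog a - negMulLog b = b * log b - a * log a := by simp only [negMulLog]; ring
    _ ≤ a * log b - a * log a :=
        sub_le_sub_right (mul_le_mul_of_nonpos_right hab (log_nonpos hb0.le hb)) _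
    _ = a * log (b / a) := by rw [log_div hb0.ne' ha.ne']; ring
    _ ≤ a * (b / a - 1) := by gcongr; exact log_le_sub_one_of_pos (div_pos hb0 ha)
    _ = b - a := by field_simp

lemma self_le_negMulLog {x : ℝ} (hx0 : 0 ≤ x) (hx : x ≤ exp (-1)) : x ≤ negMulLog x := by
  rcases hx0.eq_or_lt with rfl | hx0
  · simp
  have : log x ≤ -1 := by simpa using log_le_log hx0 hx
  calc x = x * 1 := (mul_one x).symm
    _ ≤ x * -log x := by gcongr; linarith
    _ = negMulLog x := by rw [negMulLog, neg_mul, mul_neg]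

end Real

open Real

lemma hFun_eq_negMulLog {x : ℝ} (hx0 : 0 ≤ x) (hx : x ≤ exp (-1)) : hFun x = negMulLog x := by
  rcases hx0.eq_or_lt with rfl | hx0
  · simp [hFun]
  rw [hFun, if_neg hx0.ne', if_pos (by rwa [one_div, ← exp_neg]), negMulLog, one_div, log_inv]
  ring

lemma hFun_eq_exp_neg_one {x : ℝ} (hx : exp (-1) < x) : hFun x = exp (-1) := by
  have hx0 : x ≠ 0 := ((exp_pos _).trans hx).ne'
  rw [hFun, if_neg hx0, if_neg (by rwa [one_div, ← exp_neg, not_le]), one_div, exp_neg]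

lemma abs_negMulLog_sub_le_hFun_sub {a b : ℝ} (ha : 0 ≤ a) (hab : a ≤ b) (hb : b ≤ 1) :
    |negMulLog b - negMulLog a| ≤ hFun (b - a) := by
  have hd : 0 ≤ b - a := sub_nonneg.mpr hab
  rcases le_or_gt (b - a) (exp (-1)) with hsmall | hlarge
  · rw [hFun_eq_negMulLog hd hsmall, abs_le]
    have hsub : negMulLog b ≤ negMulLog a + negMulLog (b - a) := by
      simpa using negMulLog_add_le ha hd
    constructor <;>
      linarith [negMulLog_sub_negMulLog_le_sub ha hab hb, self_le_negMulLog hd hsmall]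
  · rw [hFun_eq_exp_neg_one hlarge, abs_le]
    constructor <;>
      linarith [negMulLog_nonneg ha (hab.trans hb), negMulLog_nonneg (ha.trans hab) hb,
        negMulLog_le_exp_neg_one ha, negMulLog_le_exp_neg_one (ha.trans hab)]

lemma abs_negMulLog_sub_le_hFun_abs_sub {a b : ℝ} (ha : 0 ≤ a) (ha1 : a ≤ 1) (hb : 0 ≤ b)
    (hb1 : b ≤ 1) : |negMulLog a - negMulLog b| ≤ hFun |a - b| := by
  rcases le_total a b with hab | hba
  · rw [abs_sub_comm, abs_sub_comm a, abs_of_nonneg (sub_nonneg.mpr hab)]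
    exact abs_negMulLog_sub_le_hFun_sub ha hab hb1
  · rw [abs_of_nonneg (sub_nonneg.mpr hba)]
    exact abs_negMulLog_sub_le_hFun_sub hb hba ha1

/-- for probability distributions `p, q` on a finite set `𝒴`,
`|H(p) − H(q)| ≤ ∑ y, h(|p(y) − q(y)|)`. -/
theorem stmt_13 {YT : Type} [Fintype YT]
    (p q : YT → ℝ)
    (hp0 : ∀ y, 0 ≤ p y) (hp1 : (∑ y, p y) = 1)
    (hq0 : ∀ y, 0 ≤ q y) (hq1 : (∑ y, q y) = 1) :
    |(-∑ y, p y * Real.log (p y)) - (-∑ y, q y * Real.log (q y))| ≤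
      ∑ y, hFun |p y - q y| := by
  have le_one {r : YT → ℝ} (hr0 : ∀ y, 0 ≤ r y) (hr1 : ∑ y, r y = 1) (y : YT) : r y ≤ 1 :=
    hr1 ▸ single_le_sum (fun i _ ↦ hr0 i) (mem_univ y)
  have entropy_eq (r : YT → ℝ) : -∑ y, r y * log (r y) = ∑ y, negMulLog (r y) := by
    simp [negMulLog, sum_neg_distrib]
  calc |(-∑ y, p y * log (p y)) - (-∑ y, q y * log (q y))|
      = |∑ y, (negMulLog (p y) - negMulLog (q y))| := by
        rw [entropy_eq, entropy_eq, sum_sub_distrib]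
    _ ≤ ∑ y, |negMulLog (p y) - negMulLog (q y)| := abs_sum_le_sum_abs _ _
    _ ≤ ∑ y, hFun |p y - q y| := sum_le_sum fun y _ ↦
        abs_negMulLog_sub_le_hFun_abs_sub (hp0 y) (le_one hp0 hp1 y) (hq0 y) (le_one hq0 hq1 y)
end
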